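/- arXiv:1409.8496 — 4 statements merged into one kernel-verified Lean document; each statement's English description precedes it below -/
import Mathlib

section
/- Let c > 0, b ≥ 0 and let (β_n)_{n≥0} be a sequence of nonnegative reals with β_0 = 1 satisfying β_n ≤ β_{n+1}^{1/2} β_{n-1}^{1/2} and β_{n+1} ≤ ((n)²/c) β_{n-1} + (b/c) β_n for all n ≥ 1. Then β_n ≤ (b/c + n/√c) β_{n-1} for all n ≥ 1. -/
/-!
Write `x = β n`, `y = β (n - 1)`, `a = n / √c` and `d = b / c`. Squaring the interpolation
inequality and inserting the Lyapunov bound gives `x² ≤ β (n + 1) y ≤ a² y² + d x y`, so `x / y`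
is at most the positive root of `t² - d t - a²`, which is at most `d + a` since `d ≥ 0`.
-/

theorem sq_le_mul_of_le_sqrt_mul_sqrt {x u v : ℝ} (hx : 0 ≤ x) (hu : 0 ≤ u) (hv : 0 ≤ v)
    (h : x ≤ √u * √v) : x ^ 2 ≤ u * v := by
  rw [← Real.sqrt_mul hu] at h
  exact (Real.le_sqrt hx (mul_nonneg hu hv)).mp h

theorem le_add_mul_of_sq_le {x y a d : ℝ} (hy : 0 ≤ y) (ha : 0 ≤ a) (hd : 0 ≤ d)
    (h : x ^ 2 ≤ a ^ 2 * y ^ 2 + d * x * y) : x ≤ (d + a) * y := by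
  by_contra! hlt
  have hx : 0 < x := lt_of_le_of_lt (by positivity) hlt
  have hgap : a * y < x - d * y := by linarith
  have : a ^ 2 * y ^ 2 < x * (x - d * y) :=
    calc a ^ 2 * y ^ 2 ≤ (d + a) * y * (a * y) := by nlinarith [mul_nonneg hd (mul_nonneg ha (sq_nonneg y))]
      _ ≤ x * (a * y) := mul_le_mul_of_nonneg_right hlt.le (by positivity)
      _ < x * (x - d * y) := mul_lt_mul_of_pos_left hgap hx
  nlinarith

theorem moment_recursion_linear_general (c b : ℝ) (hc : 0 < c) (hb : 0 ≤ b)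
    (β : ℕ → ℝ) (hβ : ∀ n, 0 ≤ β n)
    (hHolder : ∀ n, 1 ≤ n → β n ≤ Real.sqrt (β (n + 1)) * Real.sqrt (β (n - 1)))
    (hLyap : ∀ n, 1 ≤ n → β (n + 1) ≤ ((n : ℝ) ^ 2 / c) * β (n - 1) + (b / c) * β n) :
    ∀ n, 1 ≤ n → β n ≤ (b / c + (n : ℝ) / Real.sqrt c) * β (n - 1) := by
  intro n hn
  have hquad : β n ^ 2 ≤ ((n : ℝ) / √c) ^ 2 * β (n - 1) ^ 2 + b / c * β n * β (n - 1) :=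
    calc β n ^ 2 ≤ β (n + 1) * β (n - 1) :=
          sq_le_mul_of_le_sqrt_mul_sqrt (hβ n) (hβ _) (hβ _) (hHolder n hn)
      _ ≤ ((n : ℝ) ^ 2 / c * β (n - 1) + b / c * β n) * β (n - 1) :=
          mul_le_mul_of_nonneg_right (hLyap n hn) (hβ _)
      _ = ((n : ℝ) / √c) ^ 2 * β (n - 1) ^ 2 + b / c * β n * β (n - 1) := by
          rw [div_pow, Real.sq_sqrt hc.le]; ring
  exact le_add_mul_of_sq_le (hβ _) (by positivity) (by positivity) hquad

theorem moment_recursion_linear (c b : ℝ) (hc : 0 < c) (hb : 0 ≤ b)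
    (β : ℕ → ℝ) (hβ : ∀ n, 0 ≤ β n) (h0 : β 0 = 1)
    (hHolder : ∀ n, 1 ≤ n → β n ≤ Real.sqrt (β (n + 1)) * Real.sqrt (β (n - 1)))
    (hLyap : ∀ n, 1 ≤ n → β (n + 1) ≤ ((n : ℝ) ^ 2 / c) * β (n - 1) + (b / c) * β n) :
    ∀ n, 1 ≤ n → β n ≤ (b / c + (n : ℝ) / Real.sqrt c) * β (n - 1) :=
  moment_recursion_linear_general c b hc hb β hβ hHolder hLyap
end

section
/- Let m ≥ 1. Then sup over t ∈ (0, 4/(27m)) of t·(m − 4(m−1)/(4 − 27t)) equals (4/27)(√m − √(m−1))², and consequently the supremum of √(t(m − 4(m−1)/(4−27t))/m) equals 2(√m − √(m−1))/(3√(3m)). -/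
/-!
With `s = √m`, `r = √(m - 1)` and `d = 4 - 27t`, completing the square gives
`27 d (4/27 (s - r)² - t (m - 4(m - 1)/d)) = (s d - 4 r)²`, so the objective never exceeds
`4/27 (s - r)²`, with equality at `d = 4r/s`. For `m > 1` this point lies inside the interval;
for `m = 1` the objective is `t` and the bound is the right endpoint `4/27`. The second
supremum follows because `y ↦ √(y/m)` is monotone and continuous.
-/

open Set Real

noncomputable def sharpDeltaObjective (M t : ℝ) : ℝ :=
  t * (M - 4 * (M - 1) / (4 - 27 * t))

noncomputable def sharpBound (M : ℝ) : ℝ :=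
  4 / 27 * (√M - √(M - 1)) ^ 2

theorem sharpBound_sub_sharpDeltaObjective {M t : ℝ} (hM : 1 ≤ M) (ht : 4 - 27 * t ≠ 0) :
    sharpBound M - sharpDeltaObjective M t
      = (√M * (4 - 27 * t) - 4 * √(M - 1)) ^ 2 / (27 * (4 - 27 * t)) := by
  have hs : √M ^ 2 = M := sq_sqrt (by linarith)
  have hr : √(M - 1) ^ 2 = M - 1 := sq_sqrt (by linarith)
  rw [sharpBound, sharpDeltaObjective, eq_div_iff (mul_ne_zero (by norm_num) ht)]
  field_simp
  linear_combination (-(27 * t ^ 2 * 27) + 27 * 4 * t) * hs - 4 * 27 * t * hr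

theorem sharpDeltaObjective_le_sharpBound {M t : ℝ} (hM : 1 ≤ M)
    (ht : t ∈ Ioo 0 (4 / (27 * M))) : sharpDeltaObjective M t ≤ sharpBound M := by
  have hd : 0 < 4 - 27 * t := by
    have := (lt_div_iff₀ (by positivity)).1 ht.2
    nlinarith [ht.1]
  have hgap := sharpBound_sub_sharpDeltaObjective hM hd.ne'
  have : 0 ≤ (√M * (4 - 27 * t) - 4 * √(M - 1)) ^ 2 / (27 * (4 - 27 * t)) := by positivity
  linarith

theorem exists_sharpDeltaObjective_eq_sharpBound {M : ℝ} (hM : 1 < M) :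
    ∃ t ∈ Ioo 0 (4 / (27 * M)), sharpDeltaObjective M t = sharpBound M := by
  have hs : 0 < √M := sqrt_pos.2 (by linarith)
  have hr : 0 < √(M - 1) := sqrt_pos.2 (by linarith)
  have hrs : √(M - 1) < √M := sqrt_lt_sqrt (by linarith) (by linarith)
  have hss : √M ^ 2 = M := sq_sqrt (by linarith)
  have hrr : √(M - 1) ^ 2 = M - 1 := sq_sqrt (by linarith)
  set t₀ := 4 * (√M - √(M - 1)) / (27 * √M) with ht₀
  have hd : 4 - 27 * t₀ = 4 * √(M - 1) / √M := by
    rw [ht₀]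
    field_simp
    ring
  refine ⟨t₀, ⟨by positivity, ?_⟩, ?_⟩
  · rw [div_lt_div_iff₀ (by positivity) (by positivity)]
    nlinarith [mul_pos (mul_pos hs hr) (sub_pos.2 hrs)]
  · have hgap := sharpBound_sub_sharpDeltaObjective hM.le (t := t₀) (by rw [hd]; positivity)
    rw [hd, mul_div_cancel₀ _ hs.ne', sub_self, zero_pow two_ne_zero, zero_div] at hgap
    linarith

theorem isLUB_sharpDeltaObjective_image {M : ℝ} (hM : 1 ≤ M) :
    IsLUB (sharpDeltaObjective M '' Ioo 0 (4 / (27 * M))) (sharpBound M) := by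
  rcases hM.eq_or_lt with rfl | hM
  · have hid : EqOn (sharpDeltaObjective 1) id (Ioo 0 (4 / (27 * 1))) := fun t _ => by
      simp [sharpDeltaObjective]
    rw [image_congr hid, image_id, sharpBound]
    norm_num
    exact isLUB_Ioo (by norm_num)
  · obtain ⟨t₀, hmem, hval⟩ := exists_sharpDeltaObjective_eq_sharpBound hM
    refine IsGreatest.isLUB ⟨⟨t₀, hmem, hval⟩, ?_⟩
    rintro _ ⟨t, ht, rfl⟩
    exact sharpDeltaObjective_le_sharpBound hM.le ht

theorem sqrt_sharpBound_div {M : ℝ} (hM : 0 < M) :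
    √(sharpBound M / M) = 2 * (√M - √(M - 1)) / (3 * √(3 * M)) := by
  have hrs : √(M - 1) ≤ √M := sqrt_le_sqrt (by linarith)
  have h3 : √(3 * M) ^ 2 = 3 * M := sq_sqrt (by positivity)
  have h3pos : 0 < √(3 * M) := sqrt_pos.2 (by positivity)
  rw [← sqrt_sq (show 0 ≤ 2 * (√M - √(M - 1)) / (3 * √(3 * M)) by
    have := sub_nonneg.2 hrs; positivity)]
  congr 1
  rw [sharpBound, div_pow, mul_pow, mul_pow, h3]
  field_simp
  ring

theorem sharp_delta_sup (m : ℕ) (hm : 1 ≤ m) :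
    sSup ((fun t : ℝ => t * ((m : ℝ) - 4 * ((m : ℝ) - 1) / (4 - 27 * t))) ''
        Set.Ioo 0 (4 / (27 * (m : ℝ))))
      = (4 / 27) * (Real.sqrt m - Real.sqrt ((m : ℝ) - 1)) ^ 2 ∧
    sSup ((fun t : ℝ =>
          Real.sqrt (t * ((m : ℝ) - 4 * ((m : ℝ) - 1) / (4 - 27 * t)) / m)) ''
        Set.Ioo 0 (4 / (27 * (m : ℝ))))
      = 2 * (Real.sqrt m - Real.sqrt ((m : ℝ) - 1)) / (3 * Real.sqrt (3 * m)) := by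
  have hM : (1 : ℝ) ≤ m := by exact_mod_cast hm
  have hlub := isLUB_sharpDeltaObjective_image hM
  have hne : (sharpDeltaObjective m '' Ioo 0 (4 / (27 * m))).Nonempty :=
    (nonempty_Ioo.2 (by positivity)).image _
  have hsup : sSup (sharpDeltaObjective m '' Ioo 0 (4 / (27 * m))) = sharpBound m :=
    hlub.csSup_eq hne
  refine ⟨hsup, ?_⟩
  have hsqrt : Monotone fun y : ℝ => √(y / m) := fun a b hab =>
    sqrt_le_sqrt (div_le_div_of_nonneg_right hab (by positivity))
  change sSup ((fun t => √(sharpDeltaObjective m t / m)) '' _) = _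
  rw [← image_image (fun y : ℝ => √(y / m)) (sharpDeltaObjective m),
    ← hsqrt.map_csSup_of_continuousAt (by fun_prop) hne hlub.bddAbove, hsup,
    sqrt_sharpBound_div (by positivity)]
end

section
/- Let λ'₁ > 0, λ'₂ ≥ 0 and let (β_n)_{n≥0} be nonnegative reals with β_0 = 1 satisfying β_n ≤ β_{n+1}^{1/2} β_{n-1}^{1/2} and β_{n+1} ≤ λ'₁ (n+1)² β_{n-1} + λ'₂ β_n for all n ≥ 1. Then β_n ≤ (λ'₂ + √λ'₁ (n+1)) β_{n-1} for all n ≥ 1, and for every γ > √λ'₁ there exists C > 0 with β_n ≤ C γⁿ n! for all n. -/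
/-!
Squaring the interpolation inequality gives `β n ^ 2 ≤ β (n + 1) * β (n - 1)`, so the recursion
becomes a quadratic inequality `x ^ 2 ≤ l₁ (n + 1) ^ 2 y ^ 2 + l₂ x y` for `x = β n`,
`y = β (n - 1)`, whose positive root is at most `(l₂ + √l₁ (n + 1)) y`. For `γ > √l₁` this
ratio is eventually below `γ n`, so `β n / (γ ^ n n!)` is eventually nonincreasing, hence bounded.
-/

open Filter Nat

theorem le_add_mul_of_sq_le_sq_mul_sq_add {x y a b : ℝ} (ha : 0 ≤ a) (hb : 0 ≤ b) (hy : 0 ≤ y)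
    (h : x ^ 2 ≤ a ^ 2 * y ^ 2 + b * x * y) : x ≤ (b + a) * y := by
  by_contra! hlt
  have hx : 0 < x := lt_of_le_of_lt (by positivity) hlt
  nlinarith [mul_lt_mul_of_pos_left hlt hx, mul_le_mul_of_nonneg_left hlt.le (mul_nonneg ha hy),
    mul_nonneg (mul_nonneg ha hb) (mul_nonneg hy hy)]

theorem le_add_sqrt_mul_of_le_sqrt_mul_sqrt {x y z l₁ l₂ c : ℝ} (hl₂ : 0 ≤ l₂) (hc : 0 ≤ c)
    (hx : 0 ≤ x) (hy : 0 ≤ y) (hz : 0 ≤ z) (hHolder : x ≤ √z * √y)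
    (hrec : z ≤ l₁ * c ^ 2 * y + l₂ * x) : x ≤ (l₂ + √l₁ * c) * y := by
  have hl₁ : l₁ ≤ √l₁ ^ 2 := Real.sq_sqrt' ▸ le_max_left _ _
  apply le_add_mul_of_sq_le_sq_mul_sq_add (by positivity) hl₂ hy
  calc x ^ 2 ≤ (√z * √y) ^ 2 := pow_le_pow_left₀ hx hHolder 2
    _ = z * y := by rw [mul_pow, Real.sq_sqrt hz, Real.sq_sqrt hy]
    _ ≤ (l₁ * c ^ 2 * y + l₂ * x) * y := mul_le_mul_of_nonneg_right hrec hy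
    _ ≤ (√l₁ * c) ^ 2 * y ^ 2 + l₂ * x * y := by
      nlinarith [mul_le_mul_of_nonneg_right hl₁ (by positivity : 0 ≤ c ^ 2 * y ^ 2)]

theorem bddAbove_range_of_eventually_succ_le {α : Type*} [Preorder α] [IsDirectedOrder α]
    {u : ℕ → α} (h : ∀ᶠ n in atTop, u (n + 1) ≤ u n) : BddAbove (Set.range u) := by
  obtain ⟨N, hN⟩ := eventually_atTop.1 h
  refine (isBoundedUnder_of_eventually_le (a := u N)
    (eventually_atTop.2 ⟨N, fun n hn => ?_⟩)).bddAbove_range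
  induction n, hn using Nat.le_induction with
  | base => rfl
  | succ n hn ih => exact (hN n hn).trans ih

theorem exists_le_mul_pow_mul_factorial {u : ℕ → ℝ} {γ : ℝ} (hγ : 0 < γ)
    (h : ∀ᶠ n in atTop, u (n + 1) ≤ γ * (n + 1) * u n) :
    ∃ C, 0 < C ∧ ∀ n, u n ≤ C * γ ^ n * n ! := by
  have hv : ∀ᶠ n in atTop, u (n + 1) / (γ ^ (n + 1) * (n + 1)!) ≤ u n / (γ ^ n * n !) := by
    filter_upwards [h] with n hn
    rw [div_le_div_iff₀ (by positivity) (by positivity), factorial_succ, pow_succ]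
    push_cast
    nlinarith [mul_le_mul_of_nonneg_right hn (by positivity : (0 : ℝ) ≤ γ ^ n * n !)]
  obtain ⟨C, hC⟩ := bddAbove_range_of_eventually_succ_le (u := fun n => u n / (γ ^ n * n !)) hv
  refine ⟨max C 1, by positivity, fun n => ?_⟩
  have hn : u n / (γ ^ n * n !) ≤ max C 1 := (hC ⟨n, rfl⟩).trans (le_max_left _ _)
  rwa [div_le_iff₀ (by positivity), ← mul_assoc] at hn

theorem gozlan_moment_recursion_general (l₁ l₂ : ℝ) (hl₂ : 0 ≤ l₂)
    (β : ℕ → ℝ) (hβ : ∀ n, 0 ≤ β n)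
    (hHolder : ∀ n, 1 ≤ n → β n ≤ Real.sqrt (β (n + 1)) * Real.sqrt (β (n - 1)))
    (hrec : ∀ n, 1 ≤ n → β (n + 1) ≤ l₁ * ((n : ℝ) + 1) ^ 2 * β (n - 1) + l₂ * β n) :
    (∀ n, 1 ≤ n → β n ≤ (l₂ + Real.sqrt l₁ * ((n : ℝ) + 1)) * β (n - 1)) ∧
    ∀ γ : ℝ, Real.sqrt l₁ < γ →
      ∃ C : ℝ, 0 < C ∧ ∀ n : ℕ, β n ≤ C * γ ^ n * (n.factorial : ℝ) := by
  have hratio : ∀ n, 1 ≤ n → β n ≤ (l₂ + √l₁ * ((n : ℝ) + 1)) * β (n - 1) := fun n hn =>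
    le_add_sqrt_mul_of_le_sqrt_mul_sqrt hl₂ (by positivity) (hβ n) (hβ _) (hβ _)
      (hHolder n hn) (hrec n hn)
  refine ⟨hratio, fun γ hγ =>
    exists_le_mul_pow_mul_factorial ((Real.sqrt_nonneg l₁).trans_lt hγ) ?_⟩
  obtain ⟨N, hN⟩ := exists_nat_ge ((l₂ + √l₁) / (γ - √l₁))
  filter_upwards [eventually_ge_atTop N] with n hn
  have hgap : l₂ + √l₁ ≤ n * (γ - √l₁) :=
    (div_le_iff₀ (sub_pos.2 hγ)).1 (hN.trans (by exact_mod_cast hn))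
  calc β (n + 1) ≤ (l₂ + √l₁ * (((n + 1 : ℕ) : ℝ) + 1)) * β n := hratio (n + 1) n.succ_pos
    _ ≤ γ * (n + 1) * β n := by
      gcongr
      · exact hβ n
      · push_cast
        linarith

theorem gozlan_moment_recursion (l₁ l₂ : ℝ) (hl₁ : 0 < l₁) (hl₂ : 0 ≤ l₂)
    (β : ℕ → ℝ) (hβ : ∀ n, 0 ≤ β n) (h0 : β 0 = 1)
    (hHolder : ∀ n, 1 ≤ n → β n ≤ Real.sqrt (β (n + 1)) * Real.sqrt (β (n - 1)))
    (hrec : ∀ n, 1 ≤ n → β (n + 1) ≤ l₁ * ((n : ℝ) + 1) ^ 2 * β (n - 1) + l₂ * β n) :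
    (∀ n, 1 ≤ n → β n ≤ (l₂ + Real.sqrt l₁ * ((n : ℝ) + 1)) * β (n - 1)) ∧
    ∀ γ : ℝ, Real.sqrt l₁ < γ →
      ∃ C : ℝ, 0 < C ∧ ∀ n : ℕ, β n ≤ C * γ ^ n * (n.factorial : ℝ) :=
  gozlan_moment_recursion_general l₁ l₂ hl₂ β hβ hHolder hrec
end

section
/- Let μ be a probability measure on ℝ^m and suppose there exist constants λ₁ > 0, λ₂ ≥ 0 and R > 0 such that for every polynomial-growth C¹ function h, ∫ h² dμ ≤ λ₁ ∫ Σ_{i=1}^m |∂_i h|²/(1+x_i²) dμ + λ₂ ∫_{B(0,R+1)} h² dμ. Then all moments β_n = ∫ |x|^{2n} dμ are finite and satisfy β_n ≤ λ₁ m n² β_{n-2} + λ₂ (R+1)² β_{n-1} for all n ≥ 2. -/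
/-!
Applying the inequality to `h = ‖x‖ ^ n`, we have `|∂ᵢ h|² = n² xᵢ² ‖x‖^(2n-4)` and
`xᵢ² / (1 + xᵢ²) ≤ 1`, so the gradient term is at most `m n² β_{n-2}`; on the ball,
`‖x‖^(2n) ≤ (R+1)² ‖x‖^(2n-2)`. This needs the moments to be finite in the first place. For that,
apply the inequality to the bounded truncations `(K ‖x‖² / (K + ‖x‖²))^(k+1)`: their gradient term
is controlled by `β_{2k}` uniformly in `K`, so letting `K → ∞` Fatou's lemma makes `β_{2k+2}`
finite.
-/

open MeasureTheory Filter Topology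

theorem integrable_of_tendsto_of_integral_le {α : Type*} [MeasurableSpace α] {μ : Measure α}
    {F : ℕ → α → ℝ} {f : α → ℝ} {C : ℝ} (hF : ∀ n, Integrable (F n) μ) (hF₀ : ∀ n, 0 ≤ F n)
    (hFf : ∀ x, Tendsto (fun n ↦ F n x) atTop (𝓝 (f x))) (hC : ∀ n, ∫ x, F n x ∂μ ≤ C) :
    Integrable f μ := by
  refine ⟨aestronglyMeasurable_of_tendsto_ae _ (fun n ↦ (hF n).1) (.of_forall hFf), ?_⟩
  have hlin : ∀ n, ∫⁻ x, ‖F n x‖ₑ ∂μ ≤ ENNReal.ofReal C := fun n ↦ by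
    simp_rw [Real.enorm_of_nonneg (hF₀ n _)]
    rw [← ofReal_integral_eq_lintegral_ofReal (hF n) (.of_forall (hF₀ n))]
    exact ENNReal.ofReal_le_ofReal (hC n)
  calc ∫⁻ x, ‖f x‖ₑ ∂μ = ∫⁻ x, liminf (fun n ↦ ‖F n x‖ₑ) atTop ∂μ :=
        lintegral_congr fun x ↦ (hFf x).enorm.liminf_eq.symm
    _ ≤ liminf (fun n ↦ ∫⁻ x, ‖F n x‖ₑ ∂μ) atTop :=
        lintegral_liminf_le' fun n ↦ (hF n).1.aemeasurable.enorm
    _ ≤ ENNReal.ofReal C := liminf_le_of_frequently_le' (.of_forall hlin)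
    _ < ⊤ := ENNReal.ofReal_lt_top

theorem integrable_pow_of_le {α : Type*} [MeasurableSpace α] {μ : Measure α}
    [IsFiniteMeasure μ] {f : α → ℝ} (hf : AEStronglyMeasurable f μ) (hf₀ : 0 ≤ f) {a b : ℕ}
    (hab : a ≤ b) (hb : Integrable (fun x ↦ f x ^ b) μ) : Integrable (fun x ↦ f x ^ a) μ := by
  refine ((integrable_const 1).add hb).mono' (hf.pow a) (.of_forall fun x ↦ ?_)
  rw [Real.norm_of_nonneg (pow_nonneg (hf₀ x) a), Pi.add_apply]
  rcases le_total (f x) 1 with hx | hx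
  · linarith [pow_le_one₀ (hf₀ x) hx (n := a), pow_nonneg (hf₀ x) b]
  · linarith [pow_le_pow_right₀ hx hab]

noncomputable def parallelSum (a b : ℝ) : ℝ := a * b / (a + b)

section parallelSum
variable {a b : ℝ}

theorem parallelSum_nonneg (ha : 0 < a) (hb : 0 ≤ b) : 0 ≤ parallelSum a b := by
  unfold parallelSum; positivity

theorem parallelSum_le_left (ha : 0 < a) (hb : 0 ≤ b) : parallelSum a b ≤ a := by
  unfold parallelSum; rw [div_le_iff₀ (by positivity)]; nlinarith

theorem parallelSum_le_right (ha : 0 < a) (hb : 0 ≤ b) : parallelSum a b ≤ b := by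
  unfold parallelSum; rw [div_le_iff₀ (by positivity)]; nlinarith

theorem hasDerivAt_parallelSum (ha : 0 < a) (hb : 0 ≤ b) :
    HasDerivAt (parallelSum a) ((a / (a + b)) ^ 2) b := by
  have hab : a + b ≠ 0 := by positivity
  have h := ((hasDerivAt_id' b).const_mul a).div ((hasDerivAt_id' b).const_add a) hab
  exact h.congr_deriv (by field_simp; ring)

theorem tendsto_parallelSum_atTop (b : ℝ) : Tendsto (parallelSum · b) atTop (𝓝 b) := by
  have : Tendsto (fun a ↦ b - b ^ 2 / (a + b)) atTop (𝓝 (b - 0)) :=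
    tendsto_const_nhds.sub
      (tendsto_const_nhds.div_atTop (tendsto_atTop_add_const_right _ b tendsto_id))
  rw [sub_zero] at this
  refine this.congr' ?_
  filter_upwards [eventually_gt_atTop (-b)] with a ha
  have : a + b ≠ 0 := by linarith
  unfold parallelSum
  field_simp
  ring

theorem sq_parallelSum_pow_le {E : Type*} [NormedAddCommGroup E] {K : ℝ} (hK : 0 < K) (k : ℕ)
    (x : E) :
    (parallelSum K (‖x‖ ^ 2) ^ (k + 1)) ^ 2 ≤ ‖x‖ ^ (4 * (k + 1)) := by
  rw [← pow_mul, show 4 * (k + 1) = 2 * ((k + 1) * 2) by ring, pow_mul ‖x‖]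
  exact pow_le_pow_left₀ (parallelSum_nonneg hK (by positivity))
    (parallelSum_le_right hK (by positivity)) _

end parallelSum

theorem HasDerivAt.hasFDerivAt_comp_norm_sq {E : Type*} [NormedAddCommGroup E]
    [InnerProductSpace ℝ E] {φ : ℝ → ℝ} {φ' : ℝ} {x : E} (hφ : HasDerivAt φ φ' (‖x‖ ^ 2)) :
    HasFDerivAt (fun y ↦ φ (‖y‖ ^ 2)) ((2 * φ') • innerSL ℝ x) x := by
  have h := hφ.comp_hasFDerivAt x (hasStrictFDerivAt_norm_sq x).hasFDerivAt
  exact h.congr_fderiv (by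
    ext; simp only [smul_apply, coe_innerSL_apply, nsmul_eq_mul, Nat.cast_ofNat, smul_eq_mul]; ring)

theorem sum_sq_fderiv_single_div_le {m : ℕ} {h : EuclideanSpace ℝ (Fin m) → ℝ}
    {x : EuclideanSpace ℝ (Fin m)} {a : ℝ} (hh : HasFDerivAt h (a • innerSL ℝ x) x) :
    ∑ i, (fderiv ℝ h x (EuclideanSpace.single i 1)) ^ 2 / (1 + (x i) ^ 2) ≤ m * a ^ 2 := by
  have hterm : ∀ i, (fderiv ℝ h x (EuclideanSpace.single i 1)) ^ 2 / (1 + (x i) ^ 2) ≤ a ^ 2 := by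
    intro i
    rw [hh.fderiv, div_le_iff₀ (by positivity)]
    simp only [smul_apply, coe_innerSL_apply,
      EuclideanSpace.inner_single_right, Real.ringHom_apply, one_mul, smul_eq_mul]
    nlinarith [sq_nonneg a, sq_nonneg (x i)]
  exact (Finset.sum_le_sum fun i _ ↦ hterm i).trans_eq (by simp)

theorem setIntegral_ball_norm_pow_le {E : Type*} [NormedAddCommGroup E] [MeasurableSpace E]
    [OpensMeasurableSpace E] {ν : Measure E} {r : ℝ} {p : ℕ}
    (hp : Integrable (fun x ↦ ‖x‖ ^ p) ν) (hp₂ : Integrable (fun x ↦ ‖x‖ ^ (p + 2)) ν) :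
    ∫ x in Metric.ball 0 r, ‖x‖ ^ (p + 2) ∂ν ≤ r ^ 2 * ∫ x, ‖x‖ ^ p ∂ν := by
  calc ∫ x in Metric.ball 0 r, ‖x‖ ^ (p + 2) ∂ν
      ≤ ∫ x in Metric.ball 0 r, r ^ 2 * ‖x‖ ^ p ∂ν := by
        refine setIntegral_mono_on hp₂.integrableOn (hp.const_mul _).integrableOn
          measurableSet_ball fun x hx ↦ ?_
        rw [pow_add, mul_comm]
        gcongr
        exact (mem_ball_zero_iff.1 hx).le
    _ = r ^ 2 * ∫ x in Metric.ball 0 r, ‖x‖ ^ p ∂ν := integral_const_mul _ _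
    _ ≤ r ^ 2 * ∫ x, ‖x‖ ^ p ∂ν :=
        mul_le_mul_of_nonneg_left (setIntegral_le_integral hp (.of_forall fun x ↦ by positivity))
          (sq_nonneg r)

def WeightedPoincare {m : ℕ} (μ : Measure (EuclideanSpace ℝ (Fin m))) (l₁ l₂ R : ℝ) : Prop :=
  ∀ h : EuclideanSpace ℝ (Fin m) → ℝ, ContDiff ℝ 1 h →
    (∃ C : ℝ, ∃ k : ℕ, ∀ x, |h x| ≤ C * (1 + ‖x‖) ^ k) →
    ∫ x, (h x) ^ 2 ∂μ
      ≤ l₁ * ∫ x, ∑ i, (fderiv ℝ h x (EuclideanSpace.single i 1)) ^ 2 / (1 + (x i) ^ 2) ∂μ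
        + l₂ * ∫ x in Metric.ball (0 : EuclideanSpace ℝ (Fin m)) (R + 1), (h x) ^ 2 ∂μ

namespace WeightedPoincare

variable {m : ℕ} {μ : Measure (EuclideanSpace ℝ (Fin m))} {l₁ l₂ R : ℝ}

theorem integral_sq_le_of_gradient_le (hP : WeightedPoincare μ l₁ l₂ R) (hl₁ : 0 ≤ l₁)
    {h g : EuclideanSpace ℝ (Fin m) → ℝ} (hh : ContDiff ℝ 1 h)
    (hgrowth : ∃ C : ℝ, ∃ k : ℕ, ∀ x, |h x| ≤ C * (1 + ‖x‖) ^ k) (hg : Integrable g μ)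
    (hgrad : ∀ x, ∑ i, (fderiv ℝ h x (EuclideanSpace.single i 1)) ^ 2 / (1 + (x i) ^ 2) ≤ g x) :
    ∫ x, (h x) ^ 2 ∂μ
      ≤ l₁ * ∫ x, g x ∂μ + l₂ * ∫ x in Metric.ball 0 (R + 1), (h x) ^ 2 ∂μ := by
  have hcont : Continuous fun x : EuclideanSpace ℝ (Fin m) ↦
      ∑ i, (fderiv ℝ h x (EuclideanSpace.single i 1)) ^ 2 / (1 + (x i) ^ 2) := by
    have := hh.continuous_fderiv one_ne_zero
    refine continuous_finsetSum _ fun i _ ↦ ?_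
    exact ((this.clm_apply continuous_const).pow 2).div
      (continuous_const.add ((EuclideanSpace.proj i).continuous.pow 2)) fun x ↦ by positivity
  have hnonneg : ∀ x : EuclideanSpace ℝ (Fin m),
      0 ≤ ∑ i, (fderiv ℝ h x (EuclideanSpace.single i 1)) ^ 2 / (1 + (x i) ^ 2) :=
    fun x ↦ Finset.sum_nonneg fun i _ ↦ by positivity
  have hint := hg.mono' hcont.aestronglyMeasurable
    (.of_forall fun x ↦ (Real.norm_of_nonneg (hnonneg x)).trans_le (hgrad x))
  refine (hP h hh hgrowth).trans (add_le_add_left ?_ _)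
  exact mul_le_mul_of_nonneg_left (integral_mono hint hg hgrad) hl₁

theorem integral_sq_parallelSum_pow_le [IsFiniteMeasure μ] (hP : WeightedPoincare μ l₁ l₂ R)
    (hl₁ : 0 ≤ l₁) (hl₂ : 0 ≤ l₂) {K : ℝ} (hK : 0 < K) {k : ℕ}
    (hk : Integrable (fun x ↦ ‖x‖ ^ (4 * k)) μ) :
    ∫ x, (parallelSum K (‖x‖ ^ 2) ^ (k + 1)) ^ 2 ∂μ
      ≤ l₁ * ∫ x, m * (4 * (k + 1) ^ 2) * ‖x‖ ^ (4 * k) ∂μ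
        + l₂ * ((R + 1) ^ (4 * (k + 1)) * μ.real (Metric.ball 0 (R + 1))) := by
  set h : EuclideanSpace ℝ (Fin m) → ℝ := fun x ↦ parallelSum K (‖x‖ ^ 2) ^ (k + 1)
  have hh : ContDiff ℝ 1 h := by
    refine ContDiff.pow ?_ _
    exact (contDiff_const.mul (contDiff_norm_sq ℝ)).div (contDiff_const.add (contDiff_norm_sq ℝ))
      fun x ↦ by positivity
  have hbound : ∀ x, |h x| ≤ K ^ (k + 1) * (1 + ‖x‖) ^ 0 := fun x ↦ by
    rw [pow_zero, mul_one, abs_of_nonneg (pow_nonneg (parallelSum_nonneg hK (by positivity)) _)]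
    exact pow_le_pow_left₀ (parallelSum_nonneg hK (by positivity))
      (parallelSum_le_left hK (by positivity)) _
  have hgrad : ∀ x, ∑ i, (fderiv ℝ h x (EuclideanSpace.single i 1)) ^ 2 / (1 + (x i) ^ 2)
      ≤ m * (4 * (k + 1) ^ 2) * ‖x‖ ^ (4 * k) := fun x ↦ by
    have ht : 0 ≤ ‖x‖ ^ 2 := by positivity
    have hu := parallelSum_nonneg hK ht
    refine (sum_sq_fderiv_single_div_le
      ((hasDerivAt_parallelSum hK ht).pow (k + 1)).hasFDerivAt_comp_norm_sq).trans ?_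
    have hq : (K / (K + ‖x‖ ^ 2)) ^ 2 ≤ 1 :=
      pow_le_one₀ (by positivity) ((div_le_one (by positivity)).2 (by linarith))
    have hcoef : parallelSum K (‖x‖ ^ 2) ^ k * (K / (K + ‖x‖ ^ 2)) ^ 2 ≤ (‖x‖ ^ 2) ^ k :=
      (mul_le_of_le_one_right (by positivity) hq).trans
        (pow_le_pow_left₀ hu (parallelSum_le_right hK ht) k)
    rw [Nat.add_sub_cancel, mul_assoc (m : ℝ) (4 * _), mul_assoc ((k + 1 : ℕ) : ℝ)]
    refine mul_le_mul_of_nonneg_left ?_ (Nat.cast_nonneg m)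
    calc _ ≤ (2 * ((k + 1 : ℕ) * (‖x‖ ^ 2) ^ k)) ^ 2 := by gcongr (2 * (_ * ?_)) ^ 2
      _ = 4 * (k + 1) ^ 2 * ‖x‖ ^ (4 * k) := by push_cast; ring
  refine (hP.integral_sq_le_of_gradient_le hl₁ hh ⟨_, 0, hbound⟩ (hk.const_mul _) hgrad).trans ?_
  gcongr
  refine (Real.le_norm_self _).trans
    (norm_setIntegral_le_of_norm_le_const (measure_lt_top _ _) fun x hx ↦ ?_)
  rw [Real.norm_of_nonneg (by positivity)]
  exact (sq_parallelSum_pow_le hK k x).trans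
    (pow_le_pow_left₀ (norm_nonneg x) (mem_ball_zero_iff.1 hx).le _)

theorem integrable_norm_pow_four_mul_succ [IsFiniteMeasure μ] (hP : WeightedPoincare μ l₁ l₂ R)
    (hl₁ : 0 ≤ l₁) (hl₂ : 0 ≤ l₂) {k : ℕ} (hk : Integrable (fun x ↦ ‖x‖ ^ (4 * k)) μ) :
    Integrable (fun x ↦ ‖x‖ ^ (4 * (k + 1))) μ := by
  have hK : ∀ N : ℕ, (0 : ℝ) < N + 1 := fun N ↦ N.cast_add_one_pos
  refine integrable_of_tendsto_of_integral_le
    (F := fun N x ↦ (parallelSum (N + 1) (‖x‖ ^ 2) ^ (k + 1)) ^ 2) (fun N ↦ ?_)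
    (fun N x ↦ sq_nonneg _) (fun x ↦ ?_)
    (fun N ↦ integral_sq_parallelSum_pow_le hP hl₁ hl₂ (hK N) hk)
  · refine (integrable_const ((((N : ℝ) + 1) ^ (k + 1)) ^ 2)).mono' ?_ (.of_forall fun x ↦ ?_)
    · exact (((continuous_const.mul (continuous_norm.pow 2)).div
        (continuous_const.add (continuous_norm.pow 2))
          fun x ↦ (add_pos_of_pos_of_nonneg (hK N) (sq_nonneg _)).ne').pow _).pow _
        |>.aestronglyMeasurable
    · have hu := parallelSum_nonneg (hK N) (sq_nonneg ‖x‖)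
      rw [Real.norm_of_nonneg (by positivity)]
      exact pow_le_pow_left₀ (by positivity)
        (pow_le_pow_left₀ hu (parallelSum_le_left (hK N) (sq_nonneg ‖x‖)) _) _
  · have hN : Tendsto (fun N : ℕ ↦ (N : ℝ) + 1) atTop atTop :=
      tendsto_atTop_add_const_right _ 1 tendsto_natCast_atTop_atTop
    rw [show ‖x‖ ^ (4 * (k + 1)) = ((‖x‖ ^ 2) ^ (k + 1)) ^ 2 by rw [← pow_mul, ← pow_mul]; ring_nf]
    exact (((tendsto_parallelSum_atTop (‖x‖ ^ 2)).comp hN).pow (k + 1)).pow 2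

theorem integral_norm_pow_le (hP : WeightedPoincare μ l₁ l₂ R) (hl₁ : 0 ≤ l₁) (hl₂ : 0 ≤ l₂)
    (hmom : ∀ p : ℕ, Integrable (fun x ↦ ‖x‖ ^ (2 * p)) μ) {n : ℕ} (hn : 2 ≤ n) :
    ∫ x, ‖x‖ ^ (2 * n) ∂μ
      ≤ l₁ * m * (n : ℝ) ^ 2 * ∫ x, ‖x‖ ^ (2 * (n - 2)) ∂μ
        + l₂ * (R + 1) ^ 2 * ∫ x, ‖x‖ ^ (2 * (n - 1)) ∂μ := by
  have hn' : (1 : ℝ) < n := by exact_mod_cast hn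
  have hrpow : (fun x : EuclideanSpace ℝ (Fin m) ↦ ‖x‖ ^ (n : ℝ)) = fun x ↦ ‖x‖ ^ n :=
    funext fun x ↦ Real.rpow_natCast _ _
  have hh : ContDiff ℝ 1 fun x : EuclideanSpace ℝ (Fin m) ↦ ‖x‖ ^ n :=
    hrpow ▸ contDiff_norm_rpow hn'
  have hgrad : ∀ x : EuclideanSpace ℝ (Fin m),
      ∑ i, (fderiv ℝ (fun x ↦ ‖x‖ ^ n) x (EuclideanSpace.single i 1)) ^ 2 / (1 + (x i) ^ 2)
        ≤ m * (n : ℝ) ^ 2 * ‖x‖ ^ (2 * (n - 2)) := fun x ↦ by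
    refine (sum_sq_fderiv_single_div_le (hrpow ▸ hasFDerivAt_norm_rpow x hn')).trans_eq ?_
    rw [show (n : ℝ) - 2 = (n - 2 : ℕ) by push_cast [Nat.cast_sub hn]; ring, Real.rpow_natCast]
    ring
  have hgrowth : ∀ x : EuclideanSpace ℝ (Fin m), |‖x‖ ^ n| ≤ 1 * (1 + ‖x‖) ^ n := fun x ↦ by
    rw [abs_of_nonneg (by positivity), one_mul]
    gcongr
    linarith
  have hsq : ∀ p : ℕ, ∀ x : EuclideanSpace ℝ (Fin m), (‖x‖ ^ p) ^ 2 = ‖x‖ ^ (2 * p) :=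
    fun p x ↦ by rw [← pow_mul, mul_comm]
  have h2n : 2 * n = 2 * (n - 1) + 2 := by omega
  calc ∫ x, ‖x‖ ^ (2 * n) ∂μ = ∫ x, (‖x‖ ^ n) ^ 2 ∂μ := by simp_rw [hsq]
    _ ≤ l₁ * ∫ x, m * (n : ℝ) ^ 2 * ‖x‖ ^ (2 * (n - 2)) ∂μ
          + l₂ * ∫ x in Metric.ball 0 (R + 1), (‖x‖ ^ n) ^ 2 ∂μ :=
        hP.integral_sq_le_of_gradient_le hl₁ hh ⟨1, n, hgrowth⟩ ((hmom (n - 2)).const_mul _) hgrad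
    _ ≤ l₁ * (m * (n : ℝ) ^ 2 * ∫ x, ‖x‖ ^ (2 * (n - 2)) ∂μ)
          + l₂ * ((R + 1) ^ 2 * ∫ x, ‖x‖ ^ (2 * (n - 1)) ∂μ) := by
        rw [integral_const_mul]
        gcongr
        simp_rw [hsq, h2n]
        exact setIntegral_ball_norm_pow_le (hmom (n - 1)) (h2n ▸ hmom n)
    _ = _ := by ring

end WeightedPoincare

theorem gozlan_poincare_moments_general {m : ℕ}
    (μ : Measure (EuclideanSpace ℝ (Fin m))) [IsProbabilityMeasure μ]
    (l₁ l₂ R : ℝ) (hl₁ : 0 < l₁) (hl₂ : 0 ≤ l₂)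
    (hPoin : ∀ h : EuclideanSpace ℝ (Fin m) → ℝ, ContDiff ℝ 1 h →
      (∃ C : ℝ, ∃ k : ℕ, ∀ x, |h x| ≤ C * (1 + ‖x‖) ^ k) →
      ∫ x, (h x) ^ 2 ∂μ
        ≤ l₁ * ∫ x, ∑ i, (fderiv ℝ h x (EuclideanSpace.single i 1)) ^ 2 / (1 + (x i) ^ 2) ∂μ
          + l₂ * ∫ x in Metric.ball (0 : EuclideanSpace ℝ (Fin m)) (R + 1), (h x) ^ 2 ∂μ) :
    (∀ n : ℕ, Integrable (fun x => ‖x‖ ^ (2 * n)) μ) ∧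
    (∀ n : ℕ, 2 ≤ n →
      ∫ x, ‖x‖ ^ (2 * n) ∂μ
        ≤ l₁ * m * (n : ℝ) ^ 2 * ∫ x, ‖x‖ ^ (2 * (n - 2)) ∂μ
          + l₂ * (R + 1) ^ 2 * ∫ x, ‖x‖ ^ (2 * (n - 1)) ∂μ) := by
  have hP : WeightedPoincare μ l₁ l₂ R := hPoin
  have hmom₄ : ∀ k : ℕ, Integrable (fun x ↦ ‖x‖ ^ (4 * k)) μ := by
    intro k
    induction k with
    | zero => simp
    | succ k ih => exact hP.integrable_norm_pow_four_mul_succ hl₁.le hl₂ ih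
  have hmom : ∀ n : ℕ, Integrable (fun x ↦ ‖x‖ ^ (2 * n)) μ := fun n ↦
    integrable_pow_of_le continuous_norm.aestronglyMeasurable (fun x ↦ norm_nonneg x)
      (by omega) (hmom₄ n)
  exact ⟨hmom, fun n hn ↦ hP.integral_norm_pow_le hl₁.le hl₂ hmom hn⟩

theorem gozlan_poincare_moments {m : ℕ}
    (μ : Measure (EuclideanSpace ℝ (Fin m))) [IsProbabilityMeasure μ]
    (l₁ l₂ R : ℝ) (hl₁ : 0 < l₁) (hl₂ : 0 ≤ l₂) (hR : 0 < R)
    (hPoin : ∀ h : EuclideanSpace ℝ (Fin m) → ℝ, ContDiff ℝ 1 h →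
      (∃ C : ℝ, ∃ k : ℕ, ∀ x, |h x| ≤ C * (1 + ‖x‖) ^ k) →
      ∫ x, (h x) ^ 2 ∂μ
        ≤ l₁ * ∫ x, ∑ i, (fderiv ℝ h x (EuclideanSpace.single i 1)) ^ 2 / (1 + (x i) ^ 2) ∂μ
          + l₂ * ∫ x in Metric.ball (0 : EuclideanSpace ℝ (Fin m)) (R + 1), (h x) ^ 2 ∂μ) :
    (∀ n : ℕ, Integrable (fun x => ‖x‖ ^ (2 * n)) μ) ∧
    (∀ n : ℕ, 2 ≤ n →
      ∫ x, ‖x‖ ^ (2 * n) ∂μ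
        ≤ l₁ * m * (n : ℝ) ^ 2 * ∫ x, ‖x‖ ^ (2 * (n - 2)) ∂μ
          + l₂ * (R + 1) ^ 2 * ∫ x, ‖x‖ ^ (2 * (n - 1)) ∂μ) :=
  gozlan_poincare_moments_general μ l₁ l₂ R hl₁ hl₂ hPoin
end
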